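/- arXiv:1511.07079 — 3 statements merged into one kernel-verified Lean document; each statement's English description precedes it below -/
import Mathlib

section
/- Let H be a real Hilbert space and U, V bounded positive operators on H. Then ‖U − V‖² ≤ ‖U² − V²‖, where ‖·‖ is the operator norm. -/
/-! Write `A = U - V` and `W = U + V`. For symmetric `U`, `V` the cross terms cancel in
`⟪(U² - V²) x, x⟫ = ⟪A x, W x⟫`, and positivity gives `|⟪A x, x⟫| ≤ ⟪W x, x⟫`. Since
`‖A‖ = sup_{‖x‖ = 1} |⟪A x, x⟫|`, there are unit vectors `x` with `λ = ⟪A x, x⟫` close to `±‖A‖`;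
these are approximate eigenvectors, `‖A x - λ x‖² = ‖A x‖² - λ² ≤ ‖A‖² - λ²`, so
`⟪(U² - V²) x, x⟫ ≈ λ ⟪x, W x⟫`, whose absolute value is at least `λ² ≈ ‖A‖²`. -/

open scoped RealInnerProductSpace
open ContinuousLinearMap

variable {H : Type*} [NormedAddCommGroup H] [InnerProductSpace ℝ H] [CompleteSpace H]

open Filter Topology

namespace ContinuousLinearMap

variable {E : Type*} [NormedAddCommGroup E] [InnerProductSpace ℝ E]

theorem exists_norm_eq_one_lt_abs_inner_apply_self (T : E →L[ℝ] E)
    (hT : (T : E →ₗ[ℝ] E).IsSymmetric) {c : ℝ} (hc0 : 0 ≤ c) (hc : c < ‖T‖) :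
    ∃ x : E, ‖x‖ = 1 ∧ c < |⟪T x, x⟫| := by
  rw [T.norm_eq_iSup_rayleighQuotient hT] at hc
  obtain ⟨y, hy⟩ := exists_lt_of_lt_ciSup hc
  have hy0 : y ≠ 0 := by
    rintro rfl
    simp only [rayleighQuotient_apply_zero, abs_zero] at hy
    linarith
  have hunit : ‖(‖y‖⁻¹ : ℝ) • y‖ = 1 := norm_smul_inv_norm hy0
  refine ⟨(‖y‖⁻¹ : ℝ) • y, hunit, ?_⟩
  rw [← T.rayleigh_smul y (inv_ne_zero (norm_ne_zero_iff.mpr hy0))] at hy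
  simpa [rayleighQuotient, reApplyInnerSelf_apply, hunit] using hy

theorem abs_inner_apply_self_le_opNorm (T : E →L[ℝ] E) {x : E} (hx : ‖x‖ = 1) :
    |⟪T x, x⟫| ≤ ‖T‖ := by
  simpa [rayleighQuotient, reApplyInnerSelf_apply, hx] using T.rayleighQuotient_le_norm x

theorem norm_apply_sub_inner_smul_le (T : E →L[ℝ] E) {x : E} (hx : ‖x‖ = 1) :
    ‖T x - ⟪T x, x⟫ • x‖ ≤ √(‖T‖ ^ 2 - ⟪T x, x⟫ ^ 2) := by
  have hTx : ‖T x‖ ≤ ‖T‖ := by simpa [hx] using T.le_opNorm x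
  apply Real.le_sqrt_of_sq_le
  rw [norm_sub_sq_real, real_inner_smul_right, norm_smul, hx, Real.norm_eq_abs]
  nlinarith [sq_abs ⟪T x, x⟫, norm_nonneg (T x)]

theorem inner_mul_self_sub_mul_self_apply_self {U V : E →L[ℝ] E}
    (hU : (U : E →ₗ[ℝ] E).IsSymmetric) (hV : (V : E →ₗ[ℝ] E).IsSymmetric) (x : E) :
    ⟪(U ∘L U - V ∘L V) x, x⟫ = ⟪(U - V) x, (U + V) x⟫ := by
  have hUx : ⟪U (U x), x⟫ = ⟪U x, U x⟫ := hU (U x) x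
  have hVx : ⟪V (V x), x⟫ = ⟪V x, V x⟫ := hV (V x) x
  simp only [sub_apply, add_apply, comp_apply, inner_sub_left, inner_add_right, hUx, hVx,
    real_inner_comm (U x) (V x)]
  ring

theorem abs_inner_sub_apply_self_le {U V : E →L[ℝ] E} (hU : ∀ x, 0 ≤ ⟪U x, x⟫)
    (hV : ∀ x, 0 ≤ ⟪V x, x⟫) (x : E) : |⟪(U - V) x, x⟫| ≤ ⟪(U + V) x, x⟫ := by
  simp only [sub_apply, add_apply, inner_sub_left, inner_add_left]
  exact abs_le.mpr ⟨by linarith [hU x], by linarith [hV x]⟩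

theorem sq_inner_sub_apply_self_le {U V : E →L[ℝ] E}
    (hUs : (U : E →ₗ[ℝ] E).IsSymmetric) (hVs : (V : E →ₗ[ℝ] E).IsSymmetric)
    (hU : ∀ x, 0 ≤ ⟪U x, x⟫) (hV : ∀ x, 0 ≤ ⟪V x, x⟫) {x : E} (hx : ‖x‖ = 1) :
    ⟪(U - V) x, x⟫ ^ 2 ≤
      ‖U ∘L U - V ∘L V‖ + ‖U + V‖ * ‖(U - V) x - ⟪(U - V) x, x⟫ • x‖ := by
  set A := U - V
  set W := U + V
  set l := ⟪A x, x⟫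
  have hsplit : ⟪(U ∘L U - V ∘L V) x, x⟫ = l * ⟪W x, x⟫ + ⟪A x - l • x, W x⟫ := by
    rw [inner_mul_self_sub_mul_self_apply_self hUs hVs, inner_sub_left, real_inner_smul_left,
      real_inner_comm x]
    ring
  have hW : |l| ≤ ⟪W x, x⟫ := abs_inner_sub_apply_self_le hU hV x
  have hB := abs_inner_apply_self_le_opNorm (U ∘L U - V ∘L V) hx
  have herr : |⟪A x - l • x, W x⟫| ≤ ‖W‖ * ‖A x - l • x‖ := by
    have hWx : ‖W x‖ ≤ ‖W‖ := by simpa [hx] using W.le_opNorm x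
    calc |⟪A x - l • x, W x⟫| ≤ ‖A x - l • x‖ * ‖W x‖ := abs_real_inner_le_norm _ _
      _ ≤ ‖A x - l • x‖ * ‖W‖ := by gcongr
      _ = ‖W‖ * ‖A x - l • x‖ := mul_comm _ _
  calc l ^ 2 = |l| * |l| := by rw [← sq, sq_abs]
    _ ≤ |l| * ⟪W x, x⟫ := by gcongr
    _ = |l * ⟪W x, x⟫| := by rw [abs_mul, abs_of_nonneg ((abs_nonneg l).trans hW)]
    _ ≤ ‖U ∘L U - V ∘L V‖ + ‖W‖ * ‖A x - l • x‖ := by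
      rw [hsplit] at hB
      obtain ⟨hB₁, hB₂⟩ := abs_le.mp hB
      obtain ⟨herr₁, herr₂⟩ := abs_le.mp herr
      exact abs_le.mpr ⟨by linarith, by linarith⟩

end ContinuousLinearMap

theorem sq_le_of_forall_sq_le_add_mul_sqrt {N b w : ℝ} (hN : 0 < N)
    (h : ∀ c ∈ Set.Ico 0 N, c ^ 2 ≤ b + w * √(N ^ 2 - c ^ 2)) : N ^ 2 ≤ b := by
  have hlim : Tendsto (fun c => c ^ 2 - w * √(N ^ 2 - c ^ 2)) (𝓝[<] N) (𝓝 (N ^ 2)) := by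
    have hcont : Continuous fun c : ℝ => c ^ 2 - w * √(N ^ 2 - c ^ 2) := by fun_prop
    simpa using (hcont.tendsto N).mono_left nhdsWithin_le_nhds
  refine le_of_tendsto hlim ?_
  filter_upwards [Ioo_mem_nhdsLT hN] with c hc
  linarith [h c ⟨hc.1.le, hc.2⟩]

/-- For bounded positive operators U, V: ‖U − V‖² ≤ ‖U² − V²‖. -/
theorem stmt_6 (U V : H →L[ℝ] H)
    (hU : IsSelfAdjoint U ∧ ∀ x : H, (0:ℝ) ≤ ⟪U x, x⟫)
    (hV : IsSelfAdjoint V ∧ ∀ x : H, (0:ℝ) ≤ ⟪V x, x⟫) :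
    ‖U - V‖ ^ 2 ≤ ‖U ∘L U - V ∘L V‖ := by
  obtain ⟨hUsa, hUpos⟩ := hU
  obtain ⟨hVsa, hVpos⟩ := hV
  rcases (norm_nonneg (U - V)).eq_or_lt with hN | hN
  · simp [← hN]
  refine sq_le_of_forall_sq_le_add_mul_sqrt hN (w := ‖U + V‖) fun c hc => ?_
  obtain ⟨x, hx, hcx⟩ := (U - V).exists_norm_eq_one_lt_abs_inner_apply_self
    (hUsa.sub hVsa).isSymmetric hc.1 hc.2
  have hc2 : c ^ 2 ≤ ⟪(U - V) x, x⟫ ^ 2 := (pow_le_pow_left₀ hc.1 hcx.le 2).trans_eq (sq_abs _)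
  calc c ^ 2 ≤ ⟪(U - V) x, x⟫ ^ 2 := hc2
    _ ≤ ‖U ∘L U - V ∘L V‖ + ‖U + V‖ * ‖(U - V) x - ⟪(U - V) x, x⟫ • x‖ :=
      sq_inner_sub_apply_self_le hUsa.isSymmetric hVsa.isSymmetric hUpos hVpos hx
    _ ≤ ‖U ∘L U - V ∘L V‖ + ‖U + V‖ * √(‖U - V‖ ^ 2 - ⟪(U - V) x, x⟫ ^ 2) := by
      gcongr
      exact (U - V).norm_apply_sub_inner_smul_le hx
    _ ≤ ‖U ∘L U - V ∘L V‖ + ‖U + V‖ * √(‖U - V‖ ^ 2 - c ^ 2) := by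
      gcongr
end

section
/- Let H be a real Hilbert space and A, B bounded linear operators on H. Then ‖|A| − |B|‖² ≤ (‖A‖ + ‖B‖)·‖A − B‖, where |T| = √(T*T). In particular, the map T ↦ |T| is continuous with respect to the operator norm. -/
/-!
Write `D = S - T` for positive `S, T`. For a unit vector `x` with `μ = ⟪D x, x⟫ ≥ 0`, split
`D x = μ x + r` with `r ⟂ x`, so `‖r‖² = ‖D x‖² - μ² ≤ ‖D‖² - μ²`. Since
`⟪(S² - T²) x, x⟫ = ⟪(S + T) x, D x⟫ = μ ⟪(S + T) x, x⟫ + ⟪(S + T) x, r⟫` and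
`⟪(S + T) x, x⟫ = μ + 2 ⟪T x, x⟫ ≥ μ`, this gives
`μ² ≤ ‖S² - T²‖ + (‖S‖ + ‖T‖) √(‖D‖² - μ²)`, and by symmetry the same holds when `μ ≤ 0`.
Since `D` is self-adjoint, `|μ|` comes arbitrarily close to `‖D‖`, and in the limit
`‖S - T‖² ≤ ‖S² - T²‖`. Applied to `S = |A|`, `T = |B|` this finishes the proof, because
`A*A - B*B = A*(A - B) + (A - B)*B`.
-/

open scoped RealInnerProductSpace
open ContinuousLinearMap

theorem norm_star_mul_self_sub_star_mul_self_le {R : Type*} [NonUnitalNormedRing R] [StarRing R]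
    [NormedStarGroup R] (a b : R) :
    ‖star a * a - star b * b‖ ≤ (‖a‖ + ‖b‖) * ‖a - b‖ := by
  have hsplit : star a * a - star b * b = star a * (a - b) + star (a - b) * b := by
    simp only [star_sub, mul_sub, sub_mul]
    abel
  calc ‖star a * a - star b * b‖ ≤ ‖star a‖ * ‖a - b‖ + ‖star (a - b)‖ * ‖b‖ := by
        rw [hsplit]
        exact norm_add_le_of_le (norm_mul_le _ _) (norm_mul_le _ _)
    _ = (‖a‖ + ‖b‖) * ‖a - b‖ := by
        rw [norm_star, norm_star]
        ring

section RealInnerProductSpace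

variable {E : Type*} [NormedAddCommGroup E] [InnerProductSpace ℝ E]

theorem norm_sub_inner_smul_sq_of_norm_eq_one {x : E} (hx : ‖x‖ = 1) (v : E) :
    ‖v - ⟪v, x⟫ • x‖ ^ 2 = ‖v‖ ^ 2 - ⟪v, x⟫ ^ 2 := by
  rw [norm_sub_sq_real, real_inner_smul_right, norm_smul, Real.norm_eq_abs, hx, mul_one, sq_abs]
  ring

namespace ContinuousLinearMap

theorem rayleighQuotient_of_norm_eq_one (U : E →L[ℝ] E) {x : E} (hx : ‖x‖ = 1) :
    U.rayleighQuotient x = ⟪U x, x⟫ := by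
  simp [rayleighQuotient, reApplyInnerSelf_apply, hx]

theorem inner_apply_self_le_norm_of_norm_eq_one (U : E →L[ℝ] E) {x : E} (hx : ‖x‖ = 1) :
    ⟪U x, x⟫ ≤ ‖U‖ :=
  U.rayleighQuotient_of_norm_eq_one hx ▸ (le_abs_self _).trans (U.rayleighQuotient_le_norm x)

theorem inner_comp_self_sub_comp_self {S T : E →L[ℝ] E} (hS : S.IsSymmetric)
    (hT : T.IsSymmetric) (x : E) :
    ⟪(S ∘L S - T ∘L T) x, x⟫ = ⟪(S + T) x, (S - T) x⟫ := by
  have hSS : ⟪S (S x), x⟫ = ⟪S x, S x⟫ := hS (S x) x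
  have hTT : ⟪T (T x), x⟫ = ⟪T x, T x⟫ := hT (T x) x
  simp only [sub_apply, add_apply, comp_apply, inner_sub_left, inner_add_left, inner_sub_right,
    hSS, hTT, real_inner_comm (S x) (T x)]
  ring

variable {S T : E →L[ℝ] E}

theorem sq_inner_sub_apply_le_of_nonneg (hS : S.IsSymmetric) (hT : T.IsPositive) {x : E}
    (hx : ‖x‖ = 1) (hμ : 0 ≤ ⟪(S - T) x, x⟫) :
    ⟪(S - T) x, x⟫ ^ 2 ≤
      ‖S ∘L S - T ∘L T‖ + (‖S‖ + ‖T‖) * √(‖S - T‖ ^ 2 - ⟪(S - T) x, x⟫ ^ 2) := by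
  set μ := ⟪(S - T) x, x⟫
  set r := (S - T) x - μ • x
  have hr : ‖r‖ ≤ √(‖S - T‖ ^ 2 - μ ^ 2) := by
    refine Real.le_sqrt_of_sq_le ?_
    have hDx : ‖(S - T) x‖ ≤ ‖S - T‖ := by simpa [hx] using (S - T).le_opNorm x
    rw [norm_sub_inner_smul_sq_of_norm_eq_one hx]
    gcongr
  have hsplit : ⟪(S ∘L S - T ∘L T) x, x⟫ = μ * ⟪(S + T) x, x⟫ + ⟪(S + T) x, r⟫ := by
    rw [inner_comp_self_sub_comp_self hS hT.isSymmetric, ← sub_add_cancel ((S - T) x) (μ • x),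
      inner_add_right, real_inner_smul_right]
    ring
  have hμ_le : μ * μ ≤ μ * ⟪(S + T) x, x⟫ := by
    have hsum : ⟪(S + T) x, x⟫ = μ + 2 * ⟪T x, x⟫ := by
      simp only [μ, add_apply, sub_apply, inner_add_left, inner_sub_left]
      ring
    nlinarith [hT.inner_nonneg_left x]
  have hr_term : -((‖S‖ + ‖T‖) * ‖r‖) ≤ ⟪(S + T) x, r⟫ := by
    have hSTx : ‖(S + T) x‖ ≤ ‖S‖ + ‖T‖ := by
      simpa [hx] using ((S + T).le_opNorm x).trans (mul_le_mul_of_nonneg_right (norm_add_le S T)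
        (norm_nonneg x))
    have := (neg_abs_le _).trans' (neg_le_neg (abs_real_inner_le_norm ((S + T) x) r))
    nlinarith [norm_nonneg r]
  have hN := (S ∘L S - T ∘L T).inner_apply_self_le_norm_of_norm_eq_one hx
  nlinarith [mul_le_mul_of_nonneg_left hr (by positivity : 0 ≤ ‖S‖ + ‖T‖)]

theorem sq_inner_sub_apply_le (hS : S.IsPositive) (hT : T.IsPositive) {x : E} (hx : ‖x‖ = 1) :
    ⟪(S - T) x, x⟫ ^ 2 ≤
      ‖S ∘L S - T ∘L T‖ + (‖S‖ + ‖T‖) * √(‖S - T‖ ^ 2 - ⟪(S - T) x, x⟫ ^ 2) := by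
  rcases le_total 0 ⟪(S - T) x, x⟫ with hμ | hμ
  · exact sq_inner_sub_apply_le_of_nonneg hS.isSymmetric hT hx hμ
  · have hswap : ⟪(T - S) x, x⟫ = -⟪(S - T) x, x⟫ := by
      rw [← neg_sub S T, neg_apply, inner_neg_left]
    have := sq_inner_sub_apply_le_of_nonneg hT.isSymmetric hS hx (by linarith)
    rwa [hswap, neg_sq, norm_sub_rev T S, norm_sub_rev (T ∘L T), add_comm ‖T‖] at this

theorem sq_rayleighQuotient_sub_le (hS : S.IsPositive) (hT : T.IsPositive) (x : E) :
    (S - T).rayleighQuotient x ^ 2 ≤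
      ‖S ∘L S - T ∘L T‖ + (‖S‖ + ‖T‖) * √(‖S - T‖ ^ 2 - (S - T).rayleighQuotient x ^ 2) := by
  rcases eq_or_ne x 0 with rfl | hx
  · rw [rayleighQuotient_apply_zero, zero_pow two_ne_zero]
    positivity
  · have hu : ‖‖x‖⁻¹ • x‖ = 1 := norm_smul_inv_norm hx
    rw [← rayleigh_smul _ x (inv_ne_zero (norm_ne_zero_iff.2 hx)),
      rayleighQuotient_of_norm_eq_one _ hu]
    exact sq_inner_sub_apply_le hS hT hu

theorem norm_sub_sq_le_norm_comp_self_sub (hS : S.IsPositive) (hT : T.IsPositive) :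
    ‖S - T‖ ^ 2 ≤ ‖S ∘L S - T ∘L T‖ := by
  set g : ℝ → ℝ := fun t ↦ t ^ 2 - (‖S‖ + ‖T‖) * √(‖S - T‖ ^ 2 - t ^ 2)
  have hg : Continuous g := by fun_prop
  have hbound : ∀ x, g |(S - T).rayleighQuotient x| ≤ ‖S ∘L S - T ∘L T‖ := fun x ↦ by
    simpa only [g, sq_abs, sub_le_iff_le_add] using sq_rayleighQuotient_sub_le hS hT x
  have hmem : ‖S - T‖ ∈ closure (Set.range fun x ↦ |(S - T).rayleighQuotient x|) := by
    rw [norm_eq_iSup_rayleighQuotient _ (hS.isSymmetric.sub hT.isSymmetric)]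
    exact (isLUB_ciSup (bddAbove_rayleighQuotient _)).mem_closure (Set.range_nonempty _)
  simpa [g] using closure_minimal (Set.range_subset_iff.2 hbound)
    (isClosed_le hg continuous_const) hmem

end ContinuousLinearMap

end RealInnerProductSpace

variable {H : Type*} [NormedAddCommGroup H] [InnerProductSpace ℝ H] [CompleteSpace H]

/-- ‖|A| − |B|‖² ≤ (‖A‖ + ‖B‖)·‖A − B‖ for bounded operators A, B,
where |T| denotes the positive square root of T*T. -/
theorem stmt_7 (A B absA absB : H →L[ℝ] H)
    (habsA_pos : IsSelfAdjoint absA ∧ ∀ x : H, (0:ℝ) ≤ ⟪absA x, x⟫)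
    (habsA_sq : absA ∘L absA = ContinuousLinearMap.adjoint A ∘L A)
    (habsB_pos : IsSelfAdjoint absB ∧ ∀ x : H, (0:ℝ) ≤ ⟪absB x, x⟫)
    (habsB_sq : absB ∘L absB = ContinuousLinearMap.adjoint B ∘L B) :
    ‖absA - absB‖ ^ 2 ≤ (‖A‖ + ‖B‖) * ‖A - B‖ :=
  calc ‖absA - absB‖ ^ 2 ≤ ‖absA ∘L absA - absB ∘L absB‖ :=
        norm_sub_sq_le_norm_comp_self_sub ((isPositive_iff' absA).2 habsA_pos)
          ((isPositive_iff' absB).2 habsB_pos)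
    _ = ‖star A * A - star B * B‖ := by rw [habsA_sq, habsB_sq]; rfl
    _ ≤ (‖A‖ + ‖B‖) * ‖A - B‖ := norm_star_mul_self_sub_star_mul_self_le A B
end

section
/- Let V, V^δ be bounded self-adjoint operators on a real Hilbert space H with ‖V^δ − V‖ ≤ δ, let V be positive, and let S be a bounded self-adjoint operator such that V + βS ≥ 0 in the quadratic sense for some β ≥ 0. Then |V^δ| + βS ≥ −δI in the quadratic sense, where |V^δ| = √((V^δ)*V^δ). -/
/-!
Put `N = |V^δ| - V^δ`. From `|V^δ|² = (V^δ)²` one gets `N² = |V^δ| N + N |V^δ|`, so `|V^δ|`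
commutes with `N²` and `N³ = N |V^δ| N + |V^δ| N²` is a sum of positive operators (a product of
commuting positive operators is positive). A self-adjoint operator with positive cube is positive:
its form is nonnegative on its range, hence on the closure of the range, and the kernel is the
orthogonal complement of the range. Thus `V^δ ≤ |V^δ|`, and
`|V^δ| + βS ≥ V^δ + βS ≥ V + βS - δ ≥ -δ`.
-/

open scoped RealInnerProductSpace
open ContinuousLinearMap

variable {H : Type*} [NormedAddCommGroup H] [InnerProductSpace ℝ H] [CompleteSpace H]

/-- The Riesz–Nagy iteration `a ↦ a - a²`. For an operator `0 ≤ T ≤ 1` it telescopes as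
`⟪T x, x⟫ = ∑ k < n, ‖Tₖ x‖² + ⟪Tₙ x, x⟫`, so `Tₙ x → 0`; this replaces the square root of `T`
in the proof that commuting positive operators have a positive product. -/
def rieszNagySeq {R : Type*} [Ring R] (a : R) : ℕ → R
  | 0 => a
  | n + 1 => rieszNagySeq a n - rieszNagySeq a n * rieszNagySeq a n

lemma Commute.rieszNagySeq_left {R : Type*} [Ring R] {a b : R} (h : Commute a b) (n : ℕ) :
    Commute (rieszNagySeq a n) b := by
  induction n with
  | zero => exact h
  | succ n ih => exact ih.sub_left (ih.mul_left ih)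

lemma ContinuousLinearMap.abs_inner_apply_self_le {E : Type*} [NormedAddCommGroup E]
    [InnerProductSpace ℝ E] (T : E →L[ℝ] E) (x : E) : |⟪T x, x⟫| ≤ ‖T‖ * ‖x‖ ^ 2 :=
  calc |⟪T x, x⟫| ≤ ‖T x‖ * ‖x‖ := abs_real_inner_le_norm _ _
    _ ≤ ‖T‖ * ‖x‖ * ‖x‖ := by gcongr; exact le_opNorm T x
    _ = ‖T‖ * ‖x‖ ^ 2 := by ring

lemma IsSelfAdjoint.inv_norm_smul_le_one {T : H →L[ℝ] H} (hT : IsSelfAdjoint T) :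
    ‖T‖⁻¹ • T ≤ 1 := by
  rw [le_def, isPositive_iff']
  refine ⟨(IsSelfAdjoint.one _).sub ((IsSelfAdjoint.all _).smul hT), fun x => ?_⟩
  rw [sub_apply, one_apply_eq_self, smul_apply, inner_sub_left, real_inner_smul_left,
    real_inner_self_eq_norm_sq, sub_nonneg]
  rcases (norm_nonneg T).eq_or_lt with hT0 | hT0
  · simp [← hT0]
  calc ‖T‖⁻¹ * ⟪T x, x⟫ ≤ ‖T‖⁻¹ * (‖T‖ * ‖x‖ ^ 2) :=
        mul_le_mul_of_nonneg_left ((le_abs_self _).trans (abs_inner_apply_self_le T x))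
          (inv_nonneg.mpr hT0.le)
    _ = ‖x‖ ^ 2 := inv_mul_cancel_left₀ hT0.ne' _

lemma ContinuousLinearMap.sub_mul_self_mem_Icc {T : H →L[ℝ] H} (h₀ : 0 ≤ T) (h₁ : T ≤ 1) :
    T - T * T ∈ Set.Icc 0 1 := by
  rw [Set.mem_Icc, nonneg_iff_isPositive, le_def]
  rw [nonneg_iff_isPositive] at h₀
  rw [le_def] at h₁
  have hT : adjoint T = T := h₀.isSelfAdjoint.adjoint_eq
  have h₁' : adjoint (1 - T) = 1 - T := h₁.isSelfAdjoint.adjoint_eq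
  constructor
  · have e : T - T * T = (1 - T) ∘L T ∘L adjoint (1 - T) + T ∘L (1 - T) ∘L adjoint T := by
      rw [hT, h₁']; simp only [← mul_def]; noncomm_ring
    rw [e]
    exact (h₀.conj_adjoint _).add (h₁.conj_adjoint _)
  · have e : 1 - (T - T * T) = (1 - T) + adjoint T ∘L T := by
      rw [hT, ← mul_def]; noncomm_ring
    rw [e]
    exact h₁.add (isPositive_adjoint_comp_self T)

lemma ContinuousLinearMap.rieszNagySeq_mem_Icc {T : H →L[ℝ] H} (h₀ : 0 ≤ T) (h₁ : T ≤ 1)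
    (n : ℕ) : rieszNagySeq T n ∈ Set.Icc 0 1 := by
  induction n with
  | zero => exact ⟨h₀, h₁⟩
  | succ n ih => exact sub_mul_self_mem_Icc ih.1 ih.2

lemma IsSelfAdjoint.rieszNagySeq {T : H →L[ℝ] H} (hT : IsSelfAdjoint T) (n : ℕ) :
    IsSelfAdjoint (rieszNagySeq T n) := by
  induction n with
  | zero => exact hT
  | succ n ih => exact ih.sub ((ih.commute_iff ih).mp (Commute.refl _))

lemma ContinuousLinearMap.inner_rieszNagySeq_add_sum {T R : H →L[ℝ] H} (hT : IsSelfAdjoint T)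
    (hTR : Commute T R) (x : H) (n : ℕ) :
    ⟪rieszNagySeq T n (R x), x⟫ +
      ∑ k ∈ Finset.range n, ⟪R (rieszNagySeq T k x), rieszNagySeq T k x⟫ = ⟪T (R x), x⟫ := by
  induction n with
  | zero => simp [rieszNagySeq]
  | succ n ih =>
    have hstep : ⟪(rieszNagySeq T n * rieszNagySeq T n) (R x), x⟫ =
        ⟪R (rieszNagySeq T n x), rieszNagySeq T n x⟫ := by
      have hc : rieszNagySeq T n (R x) = R (rieszNagySeq T n x) := by
        simpa only [mul_apply_eq_comp] using DFunLike.congr_fun (hTR.rieszNagySeq_left n).eq x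
      rw [mul_apply_eq_comp, hc]
      exact (hT.rieszNagySeq n).isSymmetric _ _
    rw [Finset.sum_range_succ, ← ih]
    simp only [rieszNagySeq, sub_apply, inner_sub_left, hstep]
    ring

open Filter Topology in
lemma ContinuousLinearMap.tendsto_rieszNagySeq_apply {T : H →L[ℝ] H} (h₀ : 0 ≤ T) (h₁ : T ≤ 1)
    (x : H) : Tendsto (fun n => rieszNagySeq T n x) atTop (𝓝 0) := by
  have hT : IsSelfAdjoint T := ((nonneg_iff_isPositive T).mp h₀).isSelfAdjoint
  have hsum : Summable fun k => ‖rieszNagySeq T k x‖ ^ 2 := by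
    refine summable_of_sum_range_le (c := ⟪T x, x⟫) (fun _ => by positivity) fun n => ?_
    have h := inner_rieszNagySeq_add_sum hT (Commute.one_right T) x n
    simp only [one_apply_eq_self, real_inner_self_eq_norm_sq] at h
    have hn := ((nonneg_iff_isPositive _).mp (rieszNagySeq_mem_Icc h₀ h₁ n).1).inner_nonneg_left
      x
    linarith
  have hsqrt := (Real.continuous_sqrt.tendsto 0).comp hsum.tendsto_atTop_zero
  simp only [Function.comp_def, Real.sqrt_sq (norm_nonneg _), Real.sqrt_zero] at hsqrt
  exact tendsto_zero_iff_norm_tendsto_zero.mpr hsqrt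

open Filter Topology in
lemma ContinuousLinearMap.inner_apply_apply_nonneg_of_commute {T Q : H →L[ℝ] H} (h₀ : 0 ≤ T)
    (h₁ : T ≤ 1) (hQ : 0 ≤ Q) (hTQ : Commute T Q) (x : H) : 0 ≤ ⟪T (Q x), x⟫ := by
  have hT : IsSelfAdjoint T := ((nonneg_iff_isPositive T).mp h₀).isSelfAdjoint
  have hlim : Tendsto (fun n => ⟪Q x, rieszNagySeq T n x⟫) atTop (𝓝 0) := by
    simpa using tendsto_const_nhds.inner (tendsto_rieszNagySeq_apply h₀ h₁ x)
  refine le_of_tendsto' hlim fun n => ?_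
  have hsymm : ⟪rieszNagySeq T n (Q x), x⟫ = ⟪Q x, rieszNagySeq T n x⟫ :=
    (hT.rieszNagySeq n).isSymmetric _ _
  rw [← inner_rieszNagySeq_add_sum hT hTQ x n, hsymm]
  exact le_add_of_nonneg_right <| Finset.sum_nonneg fun k _ =>
    ((nonneg_iff_isPositive Q).mp hQ).inner_nonneg_left _

lemma ContinuousLinearMap.IsPositive.mul_of_commute {P Q : H →L[ℝ] H} (hP : P.IsPositive)
    (hQ : Q.IsPositive) (hPQ : Commute P Q) : (P * Q).IsPositive := by
  refine (isPositive_iff' _).mpr ⟨(hP.isSelfAdjoint.commute_iff hQ.isSelfAdjoint).mp hPQ,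
    fun x => ?_⟩
  rcases eq_or_ne P 0 with rfl | hP0
  · simp
  have key := inner_apply_apply_nonneg_of_commute
    ((nonneg_iff_isPositive _).mpr (hP.smul_of_nonneg (inv_nonneg.mpr (norm_nonneg P))))
    hP.isSelfAdjoint.inv_norm_smul_le_one ((nonneg_iff_isPositive Q).mpr hQ)
    (hPQ.smul_left ‖P‖⁻¹) x
  rw [smul_apply, real_inner_smul_left] at key
  rw [mul_apply_eq_comp]
  exact (mul_nonneg_iff_of_pos_left (inv_pos.mpr (norm_pos_iff.mpr hP0))).mp key

lemma IsSelfAdjoint.nonneg_of_nonneg_pow_three {N : H →L[ℝ] H} (hN : IsSelfAdjoint N)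
    (h : 0 ≤ N ^ 3) : 0 ≤ N := by
  rw [nonneg_iff_isPositive, isPositive_iff'] at h ⊢
  refine ⟨hN, fun x => ?_⟩
  have hrange : closure (Set.range N) ⊆ {y | 0 ≤ ⟪N y, y⟫} := by
    refine closure_minimal ?_ (isClosed_le continuous_const (N.continuous.inner continuous_id))
    rintro _ ⟨z, rfl⟩
    calc 0 ≤ ⟪(N ^ 3) z, z⟫ := h.2 z
      _ = ⟪N (N z), N z⟫ := by
        rw [pow_three, mul_apply_eq_comp, mul_apply_eq_comp]
        exact hN.isSymmetric _ _
  obtain ⟨u, hu, v, hv, rfl⟩ :=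
    (LinearMap.range (N : H →ₗ[ℝ] H))ᗮ.exists_add_mem_mem_orthogonal x
  have hNu : N u = 0 := by
    rwa [orthogonal_range, hN.adjoint_eq] at hu
  rw [Submodule.orthogonal_orthogonal_eq_closure, ← SetLike.mem_coe,
    Submodule.topologicalClosure_coe, LinearMap.coe_range, coe_coe] at hv
  have hcross : ⟪N v, u⟫ = 0 := by
    rw [show ⟪N v, u⟫ = ⟪v, N u⟫ from hN.isSymmetric v u, hNu, inner_zero_right]
  calc 0 ≤ ⟪N v, v⟫ := hrange hv
    _ = ⟪N (u + v), u + v⟫ := by rw [map_add, hNu, zero_add, inner_add_right, hcross, zero_add]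

lemma ContinuousLinearMap.IsPositive.le_of_mul_self_eq {A B : H →L[ℝ] H} (hA : A.IsPositive)
    (hB : IsSelfAdjoint B) (h : A * A = B * B) : B ≤ A := by
  set N := A - B with hN_def
  have hN : IsSelfAdjoint N := hA.isSelfAdjoint.sub hB
  have hNN : N * N = A * N + N * A :=
    calc N * N = A * N + N * A + (B * B - A * A) := by rw [hN_def]; noncomm_ring
      _ = A * N + N * A := by rw [h, sub_self, add_zero]
  have hAAN : Commute (A * A) N :=
    ((Commute.refl A).mul_left (.refl A)).sub_right (h ▸ (Commute.refl B).mul_left (.refl B))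
  have hAN : Commute A (N * N) := by
    calc A * (N * N) = A * A * N + A * N * A := by rw [hNN]; noncomm_ring
      _ = N * (A * A) + A * N * A := by rw [hAAN.eq]
      _ = N * N * A := by rw [hNN]; noncomm_ring
  have hNN_pos : (N * N).IsPositive := by
    simpa [hN.adjoint_eq, mul_def] using isPositive_adjoint_comp_self N
  have hcube : N ^ 3 = N ∘L A ∘L adjoint N + A * (N * N) :=
    calc N ^ 3 = N * (A * N + N * A) := by rw [← hNN, pow_three]
      _ = N * (A * N) + N * N * A := by noncomm_ring
      _ = N ∘L A ∘L adjoint N + A * (N * N) := by rw [hN.adjoint_eq, hAN.eq]; rfl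
  have hcube_nonneg : 0 ≤ N ^ 3 := by
    rw [hcube, nonneg_iff_isPositive]
    exact (hA.conj_adjoint N).add (hA.mul_of_commute hNN_pos hAN)
  rw [le_def, ← nonneg_iff_isPositive]
  exact hN.nonneg_of_nonneg_pow_three hcube_nonneg

theorem stmt_12_general (V Vd S absVd : H →L[ℝ] H)
    (hVd : IsSelfAdjoint Vd)
    (δ : ℝ) (hnoise : ‖Vd - V‖ ≤ δ)
    (β : ℝ)
    (hmono : ∀ g : H, (0:ℝ) ≤ ⟪(V + β • S) g, g⟫)
    (habs_pos : IsSelfAdjoint absVd ∧ ∀ x : H, (0:ℝ) ≤ ⟪absVd x, x⟫)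
    (habs_sq : absVd ∘L absVd = ContinuousLinearMap.adjoint Vd ∘L Vd) :
    ∀ g : H, -δ * ‖g‖ ^ 2 ≤ ⟪(absVd + β • S) g, g⟫ := by
  intro g
  have hVd_le : Vd ≤ absVd := ((isPositive_iff' absVd).mpr habs_pos).le_of_mul_self_eq hVd
    (by rw [mul_def, mul_def, habs_sq, hVd.adjoint_eq])
  have habs : ⟪Vd g, g⟫ ≤ ⟪absVd g, g⟫ := by
    have := ((le_def _ _).mp hVd_le).inner_nonneg_left g
    rwa [sub_apply, inner_sub_left, sub_nonneg] at this
  have hnoise_g : -δ * ‖g‖ ^ 2 ≤ ⟪(Vd - V) g, g⟫ :=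
    calc -δ * ‖g‖ ^ 2 ≤ -(‖Vd - V‖ * ‖g‖ ^ 2) := by
          rw [neg_mul]; exact neg_le_neg (mul_le_mul_of_nonneg_right hnoise (sq_nonneg _))
      _ ≤ ⟪(Vd - V) g, g⟫ := neg_le_of_abs_le (abs_inner_apply_self_le _ _)
  have hmono_g := hmono g
  simp only [add_apply, sub_apply, smul_apply, inner_add_left, inner_sub_left,
    real_inner_smul_left] at hnoise_g hmono_g ⊢
  linarith

/-- If V is positive, ‖V^δ − V‖ ≤ δ, S is self-adjoint and V + βS ≥ 0 for some
β ≥ 0, then |V^δ| + βS ≥ −δ·I in the quadratic sense. -/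
theorem stmt_12 (V Vd S absVd : H →L[ℝ] H)
    (hV : IsSelfAdjoint V ∧ ∀ x : H, (0:ℝ) ≤ ⟪V x, x⟫)
    (hVd : IsSelfAdjoint Vd)
    (hS : IsSelfAdjoint S)
    (δ : ℝ) (hδ : 0 ≤ δ) (hnoise : ‖Vd - V‖ ≤ δ)
    (β : ℝ) (hβ : 0 ≤ β)
    (hmono : ∀ g : H, (0:ℝ) ≤ ⟪(V + β • S) g, g⟫)
    (habs_pos : IsSelfAdjoint absVd ∧ ∀ x : H, (0:ℝ) ≤ ⟪absVd x, x⟫)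
    (habs_sq : absVd ∘L absVd = ContinuousLinearMap.adjoint Vd ∘L Vd) :
    ∀ g : H, -δ * ‖g‖ ^ 2 ≤ ⟪(absVd + β • S) g, g⟫ :=
  stmt_12_general V Vd S absVd hVd δ hnoise β hmono habs_pos habs_sq
end
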